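/- There exists a constant C ≥ 1, depending only on m and M, such that for every u > 0 one has (1/C)·√(u/f(u)) ≤ φ(u) ≤ C·√(u/f(u)). -/

import Mathlib

open MeasureTheory Filter

/-- The antiderivative `F(t) = ∫₀ᵗ f(τ) dτ` of `f` vanishing at `0`. -/
noncomputable def Fant (f : ℝ → ℝ) (t : ℝ) : ℝ := ∫ τ in (0:ℝ)..t, f τ

/-- The function `φ(u) = ∫ᵤ^{+∞} dt/√(F(t))`. -/
noncomputable def phi (f : ℝ → ℝ) (u : ℝ) : ℝ := ∫ t in Set.Ioi u, 1 / Real.sqrt (Fant f t)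


lemma ratio_hasDerivAt (p : ℝ) (f f' : ℝ → ℝ)
    (hderiv : ∀ t ∈ Set.Ici (0:ℝ), HasDerivWithinAt f (f' t) (Set.Ici 0) t)
    {t : ℝ} (ht : 0 < t) :
    HasDerivAt (fun t => f t * t ^ (-(1+p)))
      (t ^ (-(1+p) - 1) * (t * f' t - (1+p) * f t)) t := by
  have h1 : HasDerivAt f (f' t) t :=
    (hderiv t ht.le).hasDerivAt (Ici_mem_nhds ht)
  have h2 : HasDerivAt (fun x : ℝ => x ^ (-(1+p))) ((-(1+p)) * t ^ (-(1+p) - 1)) t :=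
    Real.hasDerivAt_rpow_const (Or.inl (ne_of_gt ht))
  have h3 : HasDerivAt (fun y => f y * y ^ (-(1+p)))
      (f' t * t ^ (-(1+p)) + f t * (-(1+p) * t ^ (-(1+p) - 1))) t := h1.mul h2
  convert h3 using 1
  have key : t ^ (-(1+p) - 1) * t = t ^ (-(1+p)) := by
    rw [Real.rpow_sub ht, Real.rpow_one, div_mul_cancel₀ _ (ne_of_gt ht)]
  linear_combination f' t * key

lemma ratio_monoOn (p : ℝ) (f f' : ℝ → ℝ)
    (hderiv : ∀ t ∈ Set.Ici (0:ℝ), HasDerivWithinAt f (f' t) (Set.Ici 0) t)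
    (hp : ∀ t, 0 < t → (1+p) * f t ≤ t * f' t) :
    MonotoneOn (fun t => f t * t ^ (-(1+p))) (Set.Ioi 0) := by
  apply monotoneOn_of_deriv_nonneg (convex_Ioi 0)
  · intro t ht
    exact (ratio_hasDerivAt p f f' hderiv ht).continuousAt.continuousWithinAt
  · rw [interior_Ioi]
    intro t ht
    exact (ratio_hasDerivAt p f f' hderiv ht).differentiableAt.differentiableWithinAt
  · rw [interior_Ioi]
    intro t ht
    rw [(ratio_hasDerivAt p f f' hderiv ht).deriv]
    exact mul_nonneg (Real.rpow_pos_of_pos ht _).le (sub_nonneg.2 (hp t ht))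

lemma ratio_antiOn (p : ℝ) (f f' : ℝ → ℝ)
    (hderiv : ∀ t ∈ Set.Ici (0:ℝ), HasDerivWithinAt f (f' t) (Set.Ici 0) t)
    (hp : ∀ t, 0 < t → t * f' t ≤ (1+p) * f t) :
    AntitoneOn (fun t => f t * t ^ (-(1+p))) (Set.Ioi 0) := by
  apply antitoneOn_of_deriv_nonpos (convex_Ioi 0)
  · intro t ht
    exact (ratio_hasDerivAt p f f' hderiv ht).continuousAt.continuousWithinAt
  · rw [interior_Ioi]
    intro t ht
    exact (ratio_hasDerivAt p f f' hderiv ht).differentiableAt.differentiableWithinAt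
  · rw [interior_Ioi]
    intro t ht
    rw [(ratio_hasDerivAt p f f' hderiv ht).deriv]
    exact mul_nonpos_of_nonneg_of_nonpos (Real.rpow_pos_of_pos ht _).le
      (sub_nonpos.2 (hp t ht))

lemma Fant_lower (M : ℝ) (hM : 0 < M) (f : ℝ → ℝ) (hf00 : f 0 = 0)
    (hmono : MonotoneOn f (Set.Ici 0))
    (hA2 : ∀ a b : ℝ, 0 < a → a ≤ b → f b * b ^ (-(1+M)) ≤ f a * a ^ (-(1+M))) :
    ∀ t : ℝ, 0 < t → t * f t / (2+M) ≤ Fant f t := by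
  intro t ht
  have hft : 0 ≤ f t := by
    have := hmono (Set.mem_Ici.2 (le_refl (0:ℝ))) (Set.mem_Ici.2 ht.le) ht.le
    rw [hf00] at this; linarith
  have hWm : MonotoneOn f (Set.uIcc 0 t) := by
    rw [Set.uIcc_of_le ht.le]; exact hmono.mono Set.Icc_subset_Ici_self
  have hfint : IntervalIntegrable f volume 0 t := hWm.intervalIntegrable
  set c := f t * t ^ (-(1+M)) with hc
  have hcnn : 0 ≤ c := mul_nonneg hft (Real.rpow_pos_of_pos ht _).le
  have hlow : ∀ τ ∈ Set.Icc (0:ℝ) t, c * τ ^ (1+M) ≤ f τ := by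
    intro τ ⟨hτ0, hτt⟩
    rcases eq_or_lt_of_le hτ0 with h | h
    · rw [← h, Real.zero_rpow (by linarith), hf00, mul_zero]
    · have h1 := hA2 τ t h hτt
      have h2 := mul_le_mul_of_nonneg_right h1 (Real.rpow_pos_of_pos h (1+M)).le
      have h3 : τ ^ (-(1+M)) * τ ^ (1+M) = 1 := by
        rw [← Real.rpow_add h, neg_add_cancel, Real.rpow_zero]
      calc c * τ ^ (1+M) = f t * t ^ (-(1+M)) * τ ^ (1+M) := by rw [hc]
        _ ≤ f τ * τ ^ (-(1+M)) * τ ^ (1+M) := h2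
        _ = f τ * (τ ^ (-(1+M)) * τ ^ (1+M)) := by ring
        _ = f τ := by rw [h3, mul_one]
  have hmono2 : MonotoneOn (fun τ => c * τ ^ (1+M)) (Set.uIcc 0 t) := by
    rw [Set.uIcc_of_le ht.le]
    intro x hx y hy hxy
    exact mul_le_mul_of_nonneg_left (Real.rpow_le_rpow hx.1 hxy (by linarith)) hcnn
  have hint2 : IntervalIntegrable (fun τ => c * τ ^ (1+M)) volume 0 t :=
    hmono2.intervalIntegrable
  have hcomp : ∫ τ in (0:ℝ)..t, c * τ ^ (1+M) ≤ Fant f t :=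
    intervalIntegral.integral_mono_on ht.le hint2 hfint hlow
  have hval : ∫ τ in (0:ℝ)..t, c * τ ^ (1+M) = t * f t / (2+M) := by
    rw [intervalIntegral.integral_const_mul, integral_rpow (Or.inl (by linarith))]
    rw [Real.zero_rpow (by linarith)]
    have e1 : t ^ (-(1+M)) * t ^ (1+M+1) = t := by
      rw [← Real.rpow_add ht]
      have : -(1+M) + (1+M+1) = 1 := by ring
      rw [this, Real.rpow_one]
    calc c * ((t ^ (1+M+1) - 0) / (1+M+1))
        = f t * (t ^ (-(1+M)) * t ^ (1+M+1)) / (1+M+1) := by rw [hc]; ring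
      _ = t * f t / (2+M) := by rw [e1]; ring_nf
  linarith [hcomp, hval.symm.le]

lemma Fant_upper (m : ℝ) (hm : 0 < m) (f : ℝ → ℝ) (hf00 : f 0 = 0)
    (hmono : MonotoneOn f (Set.Ici 0))
    (hA1 : ∀ a b : ℝ, 0 < a → a ≤ b → f a * a ^ (-(1+m)) ≤ f b * b ^ (-(1+m))) :
    ∀ t : ℝ, 0 < t → Fant f t ≤ t * f t / (2+m) := by
  intro t ht
  have hft : 0 ≤ f t := by
    have := hmono (Set.mem_Ici.2 (le_refl (0:ℝ))) (Set.mem_Ici.2 ht.le) ht.le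
    rw [hf00] at this; linarith
  have hWm : MonotoneOn f (Set.uIcc 0 t) := by
    rw [Set.uIcc_of_le ht.le]; exact hmono.mono Set.Icc_subset_Ici_self
  have hfint : IntervalIntegrable f volume 0 t := hWm.intervalIntegrable
  set c := f t * t ^ (-(1+m)) with hc
  have hcnn : 0 ≤ c := mul_nonneg hft (Real.rpow_pos_of_pos ht _).le
  have hup : ∀ τ ∈ Set.Icc (0:ℝ) t, f τ ≤ c * τ ^ (1+m) := by
    intro τ ⟨hτ0, hτt⟩
    rcases eq_or_lt_of_le hτ0 with h | h
    · rw [← h, Real.zero_rpow (by linarith), hf00, mul_zero]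
    · have h1 := hA1 τ t h hτt
      have h2 := mul_le_mul_of_nonneg_right h1 (Real.rpow_pos_of_pos h (1+m)).le
      have h3 : τ ^ (-(1+m)) * τ ^ (1+m) = 1 := by
        rw [← Real.rpow_add h, neg_add_cancel, Real.rpow_zero]
      calc f τ = f τ * (τ ^ (-(1+m)) * τ ^ (1+m)) := by rw [h3, mul_one]
        _ = f τ * τ ^ (-(1+m)) * τ ^ (1+m) := by ring
        _ ≤ f t * t ^ (-(1+m)) * τ ^ (1+m) := h2
        _ = c * τ ^ (1+m) := by rw [hc]
  have hmono2 : MonotoneOn (fun τ => c * τ ^ (1+m)) (Set.uIcc 0 t) := by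
    rw [Set.uIcc_of_le ht.le]
    intro x hx y hy hxy
    exact mul_le_mul_of_nonneg_left (Real.rpow_le_rpow hx.1 hxy (by linarith)) hcnn
  have hint2 : IntervalIntegrable (fun τ => c * τ ^ (1+m)) volume 0 t :=
    hmono2.intervalIntegrable
  have hcomp : Fant f t ≤ ∫ τ in (0:ℝ)..t, c * τ ^ (1+m) :=
    intervalIntegral.integral_mono_on ht.le hfint hint2 hup
  have hval : ∫ τ in (0:ℝ)..t, c * τ ^ (1+m) = t * f t / (2+m) := by
    rw [intervalIntegral.integral_const_mul, integral_rpow (Or.inl (by linarith))]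
    rw [Real.zero_rpow (by linarith)]
    have e1 : t ^ (-(1+m)) * t ^ (1+m+1) = t := by
      rw [← Real.rpow_add ht]
      have : -(1+m) + (1+m+1) = 1 := by ring
      rw [this, Real.rpow_one]
    calc c * ((t ^ (1+m+1) - 0) / (1+m+1))
        = f t * (t ^ (-(1+m)) * t ^ (1+m+1)) / (1+m+1) := by rw [hc]; ring
      _ = t * f t / (2+m) := by rw [e1]; ring_nf
  linarith [hcomp, hval.le]

/-- There exists a constant `C ≥ 1`, depending only on `m` and `M`, such that
`(1/C)·√(u/f(u)) ≤ φ(u) ≤ C·√(u/f(u))` for every `u > 0`. -/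
theorem phi_comparable_sqrt (m M : ℝ) (hm : 0 < m) (hmM : m < M) :
    ∃ C : ℝ, 1 ≤ C ∧ ∀ f f' : ℝ → ℝ,
      (∀ t, 0 ≤ t → 0 ≤ f t) → f 0 = 0 → (∀ t, 0 < t → 0 < f t) →
      MonotoneOn f (Set.Ici 0) →
      (∀ t ∈ Set.Ici (0:ℝ), HasDerivWithinAt f (f' t) (Set.Ici 0) t) →
      ContinuousOn f' (Set.Ici 0) →
      (∀ t, 0 < t → 1 + m ≤ t * f' t / f t ∧ t * f' t / f t ≤ 1 + M) →
      ∀ u, 0 < u →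
        (1 / C) * Real.sqrt (u / f u) ≤ phi f u ∧ phi f u ≤ C * Real.sqrt (u / f u) := by
  have hM : 0 < M := hm.trans hmM
  set A : ℝ := (2/m) * Real.sqrt (2+M) with hA
  set B : ℝ := Real.sqrt (2 ^ (2+M) / (2+m)) with hB
  refine ⟨max 1 (max A B), le_max_left _ _, ?_⟩
  intro f f' hf0 hf00 hfpos hmono hderiv _hcont hquot u hu
  -- the two ratio-monotonicity comparisons
  have hA1 : ∀ a b : ℝ, 0 < a → a ≤ b → f a * a ^ (-(1+m)) ≤ f b * b ^ (-(1+m)) := by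
    intro a b ha hab
    exact ratio_monoOn m f f' hderiv
      (fun t ht => by
        have h := (hquot t ht).1
        have hft := hfpos t ht
        rw [le_div_iff₀ hft] at h; linarith)
      ha (lt_of_lt_of_le ha hab) hab
  have hA2 : ∀ a b : ℝ, 0 < a → a ≤ b → f b * b ^ (-(1+M)) ≤ f a * a ^ (-(1+M)) := by
    intro a b ha hab
    exact ratio_antiOn M f f' hderiv
      (fun t ht => by
        have h := (hquot t ht).2
        have hft := hfpos t ht
        rw [div_le_iff₀ hft] at h; linarith)
      ha (lt_of_lt_of_le ha hab) hab
  have hBl := Fant_lower M hM f hf00 hmono hA2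
  have hBu := Fant_upper m hm f hf00 hmono hA1
  have hfu : 0 < f u := hfpos u hu
  have hFpos : ∀ t, 0 < t → 0 < Fant f t := fun t ht =>
    lt_of_lt_of_le (div_pos (mul_pos ht (hfpos t ht)) (by linarith)) (hBl t ht)
  -- monotonicity and measurability of Fant
  have hFmono : MonotoneOn (Fant f) (Set.Ici 0) := by
    intro s hs t ht hst
    have h1 : IntervalIntegrable f volume 0 s := by
      apply MonotoneOn.intervalIntegrable
      rw [Set.uIcc_of_le hs]; exact hmono.mono Set.Icc_subset_Ici_self
    have h2 : IntervalIntegrable f volume s t := by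
      apply MonotoneOn.intervalIntegrable
      rw [Set.uIcc_of_le hst]
      exact hmono.mono (fun x hx => le_trans hs hx.1)
    have h3 : Fant f t = Fant f s + ∫ τ in s..t, f τ :=
      (intervalIntegral.integral_add_adjacent_intervals h1 h2).symm
    have h4 : 0 ≤ ∫ τ in s..t, f τ :=
      intervalIntegral.integral_nonneg hst (fun τ hτ => hf0 τ (le_trans hs hτ.1))
    rw [h3]; linarith
  have hFae : AEMeasurable (Fant f) (volume.restrict (Set.Ioi u)) :=
    aemeasurable_restrict_of_monotoneOn measurableSet_Ioi
      (hFmono.mono (fun x hx => (hu.trans hx).le))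
  have hgmeas : AEStronglyMeasurable (fun t => 1 / Real.sqrt (Fant f t))
      (volume.restrict (Set.Ioi u)) := by
    have h : AEMeasurable (fun t => 1 / Real.sqrt (Fant f t)) (volume.restrict (Set.Ioi u)) :=
      (Real.continuous_sqrt.measurable.comp_aemeasurable hFae).const_div 1
    exact h.aestronglyMeasurable
  -- upper bound machinery
  set a : ℝ := -((2+m)/2) with ha
  have ha1 : a < -1 := by rw [ha]; linarith
  set K : ℝ := f u * u ^ (-(1+m)) / (2+M) with hK
  have hKpos : 0 < K := div_pos (mul_pos hfu (Real.rpow_pos_of_pos hu _)) (by linarith)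
  have hFlow : ∀ t, u ≤ t → K * t ^ (2+m) ≤ Fant f t := by
    intro t htu
    have ht : 0 < t := lt_of_lt_of_le hu htu
    have ht0 : 0 ≤ t := ht.le
    have h5 : f u * u ^ (-(1+m)) * t ^ (1+m) ≤ f t := by
      have h1 := hA1 u t hu htu
      have h2 := mul_le_mul_of_nonneg_right h1 (Real.rpow_pos_of_pos ht (1+m)).le
      have h3 : t ^ (-(1+m)) * t ^ (1+m) = 1 := by
        rw [← Real.rpow_add ht, neg_add_cancel, Real.rpow_zero]
      calc f u * u ^ (-(1+m)) * t ^ (1+m) ≤ f t * t ^ (-(1+m)) * t ^ (1+m) := h2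
        _ = f t * (t ^ (-(1+m)) * t ^ (1+m)) := by ring
        _ = f t := by rw [h3, mul_one]
    have e2 : t ^ (2+m) = t ^ (1+m) * t := by
      rw [show (2+m : ℝ) = (1+m) + 1 by ring, Real.rpow_add ht, Real.rpow_one]
    calc K * t ^ (2+m) = (f u * u ^ (-(1+m)) * t ^ (1+m)) * t / (2+M) := by
          rw [e2, hK]; ring
      _ ≤ f t * t / (2+M) := by gcongr
      _ = t * f t / (2+M) := by ring
      _ ≤ Fant f t := hBl t ht
  have hgnn : ∀ t : ℝ, 0 ≤ 1 / Real.sqrt (Fant f t) := fun t => by positivity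
  have hbound : ∀ t ∈ Set.Ioi u,
      1 / Real.sqrt (Fant f t) ≤ (Real.sqrt K)⁻¹ * t ^ a := by
    intro t ht
    have htu : u < t := ht
    have htp : 0 < t := hu.trans htu
    have h1 : Real.sqrt (K * t ^ (2+m)) ≤ Real.sqrt (Fant f t) :=
      Real.sqrt_le_sqrt (hFlow t htu.le)
    have h2 : Real.sqrt (K * t ^ (2+m)) = Real.sqrt K * t ^ ((2+m)/2) := by
      rw [Real.sqrt_mul hKpos.le]
      congr 1
      rw [Real.sqrt_eq_rpow, ← Real.rpow_mul htp.le,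
        show (2+m) * (1/2 : ℝ) = (2+m)/2 by ring]
    have h3 : 0 < Real.sqrt K * t ^ ((2+m)/2) :=
      mul_pos (Real.sqrt_pos.2 hKpos) (Real.rpow_pos_of_pos htp _)
    have h4 : 1 / Real.sqrt (Fant f t) ≤ 1 / (Real.sqrt K * t ^ ((2+m)/2)) := by
      apply one_div_le_one_div_of_le h3
      rw [← h2]; exact h1
    calc 1 / Real.sqrt (Fant f t) ≤ 1 / (Real.sqrt K * t ^ ((2+m)/2)) := h4
      _ = (Real.sqrt K)⁻¹ * t ^ a := by
          rw [ha, Real.rpow_neg htp.le, one_div, mul_inv]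
  have hdom : IntegrableOn (fun t => (Real.sqrt K)⁻¹ * t ^ a) (Set.Ioi u) :=
    (integrableOn_Ioi_rpow_of_lt ha1 hu).const_mul _
  have hgint : IntegrableOn (fun t => 1 / Real.sqrt (Fant f t)) (Set.Ioi u) := by
    apply Integrable.mono' hdom hgmeas
    refine (ae_restrict_iff' measurableSet_Ioi).2 (Eventually.of_forall ?_)
    intro t ht
    rw [Real.norm_eq_abs, abs_of_nonneg (hgnn t)]
    exact hbound t ht
  have hphi : phi f u = ∫ t in Set.Ioi u, 1 / Real.sqrt (Fant f t) := rfl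
  -- the upper bound
  have hup : phi f u ≤ A * Real.sqrt (u / f u) := by
    have h1 : phi f u ≤ ∫ t in Set.Ioi u, (Real.sqrt K)⁻¹ * t ^ a := by
      rw [hphi]
      exact integral_mono_of_nonneg (Eventually.of_forall hgnn) hdom
        ((ae_restrict_iff' measurableSet_Ioi).2 (Eventually.of_forall hbound))
    rw [MeasureTheory.integral_const_mul, integral_Ioi_rpow_of_lt ha1 hu] at h1
    have e3 : -u ^ (a+1) / (a+1) = (2/m) * u ^ (-(m/2)) := by
      rw [ha, show -((2+m)/2) + 1 = -(m/2) by ring]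
      field_simp
    have hum : (0:ℝ) < u ^ (m:ℝ) := Real.rpow_pos_of_pos hu m
    have e5 : K⁻¹ * u ^ (-m) = (2+M) * (u / f u) := by
      rw [hK, Real.rpow_neg hu.le m, Real.rpow_neg hu.le (1+m),
        Real.rpow_add hu 1 m, Real.rpow_one]
      field_simp
    have e4 : (Real.sqrt K)⁻¹ * u ^ (-(m/2)) = Real.sqrt ((2+M) * (u / f u)) := by
      rw [← Real.sqrt_inv, show (-(m/2) : ℝ) = -m * (1/2) by ring,
        Real.rpow_mul hu.le, ← Real.sqrt_eq_rpow,
        ← Real.sqrt_mul (inv_nonneg.2 hKpos.le), e5]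
    have e6 : (Real.sqrt K)⁻¹ * ((2/m) * u ^ (-(m/2))) = A * Real.sqrt (u / f u) := by
      rw [show (Real.sqrt K)⁻¹ * ((2/m) * u ^ (-(m/2)))
          = (2/m) * ((Real.sqrt K)⁻¹ * u ^ (-(m/2))) by ring, e4,
        Real.sqrt_mul (by linarith : (0:ℝ) ≤ 2+M), hA]
      ring
    calc phi f u ≤ (Real.sqrt K)⁻¹ * (-u ^ (a+1) / (a+1)) := h1
      _ = (Real.sqrt K)⁻¹ * ((2/m) * u ^ (-(m/2))) := by rw [e3]
      _ = A * Real.sqrt (u / f u) := e6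
  -- the lower bound
  set L : ℝ := 2 ^ (2+M) / (2+m) with hL
  have hLpos : 0 < L := div_pos (Real.rpow_pos_of_pos two_pos _) (by linarith)
  have hf2u : f (2*u) ≤ 2 ^ (1+M) * f u := by
    have h1 := hA2 u (2*u) hu (by linarith)
    have h2u : (0:ℝ) < 2*u := by linarith
    have h2 := mul_le_mul_of_nonneg_right h1 (Real.rpow_pos_of_pos h2u (1+M)).le
    have h3 : (2*u) ^ (-(1+M)) * (2*u) ^ ((1+M) : ℝ) = 1 := by
      rw [← Real.rpow_add h2u, neg_add_cancel, Real.rpow_zero]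
    have h4 : u ^ (-(1+M)) * (2*u) ^ ((1+M) : ℝ) = 2 ^ ((1+M) : ℝ) := by
      rw [Real.mul_rpow (by norm_num) hu.le, Real.rpow_neg hu.le]
      have : (0:ℝ) < u ^ ((1+M):ℝ) := Real.rpow_pos_of_pos hu _
      field_simp
    calc f (2*u) = f (2*u) * ((2*u) ^ (-(1+M)) * (2*u) ^ ((1+M):ℝ)) := by
          rw [h3, mul_one]
      _ = f (2*u) * (2*u) ^ (-(1+M)) * (2*u) ^ ((1+M):ℝ) := by ring
      _ ≤ f u * u ^ (-(1+M)) * (2*u) ^ ((1+M):ℝ) := h2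
      _ = f u * (u ^ (-(1+M)) * (2*u) ^ ((1+M):ℝ)) := by ring
      _ = 2 ^ ((1+M):ℝ) * f u := by rw [h4]; ring
  have hFup2 : ∀ t ∈ Set.Ioc u (2*u), Fant f t ≤ L * (u * f u) := by
    intro t ⟨ht1, ht2⟩
    have ht : 0 < t := hu.trans ht1
    have h1 : Fant f t ≤ t * f t / (2+m) := hBu t ht
    have h2 : f t ≤ f (2*u) := hmono ht.le (by linarith : (0:ℝ) ≤ 2*u) ht2
    have hft : 0 ≤ f t := hf0 t ht.le
    have h2M : (0:ℝ) < 2 ^ ((1+M):ℝ) := Real.rpow_pos_of_pos two_pos _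
    have h3 : t * f t ≤ 2*u * (2 ^ ((1+M):ℝ) * f u) := by nlinarith
    have e6 : (2:ℝ) ^ ((2+M):ℝ) = 2 * 2 ^ ((1+M):ℝ) := by
      rw [show (2+M:ℝ) = 1 + (1+M) by ring, Real.rpow_add two_pos, Real.rpow_one]
    calc Fant f t ≤ t * f t / (2+m) := h1
      _ ≤ 2*u * (2 ^ ((1+M):ℝ) * f u) / (2+m) := by gcongr
      _ = L * (u * f u) := by rw [hL, e6]; ring
  set d : ℝ := 1 / Real.sqrt (L * (u * f u)) with hd
  have hdpos : 0 < d :=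
    one_div_pos.2 (Real.sqrt_pos.2 (mul_pos hLpos (mul_pos hu hfu)))
  have hlow2 : ∀ t ∈ Set.Ioc u (2*u), d ≤ 1 / Real.sqrt (Fant f t) := by
    intro t ht
    have htp : 0 < t := hu.trans ht.1
    have hFt : 0 < Fant f t := hFpos t htp
    rw [hd]
    apply one_div_le_one_div_of_le (Real.sqrt_pos.2 hFt)
    exact Real.sqrt_le_sqrt (hFup2 t ht)
  have hconst_int : IntegrableOn (fun _ => d) (Set.Ioc u (2*u)) volume :=
    integrableOn_const measure_Ioc_lt_top.ne
  have h7 : d * u ≤ ∫ t in Set.Ioc u (2*u), 1 / Real.sqrt (Fant f t) := by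
    have h8 : ∫ _t in Set.Ioc u (2*u), d = d * u := by
      rw [setIntegral_const, measureReal_def, Real.volume_Ioc, smul_eq_mul,
        ENNReal.toReal_ofReal (by linarith), show 2*u - u = u by ring]
      ring
    rw [← h8]
    exact setIntegral_mono_on hconst_int (hgint.mono_set Set.Ioc_subset_Ioi_self)
      measurableSet_Ioc hlow2
  have h9 : ∫ t in Set.Ioc u (2*u), 1 / Real.sqrt (Fant f t) ≤ phi f u := by
    rw [hphi]
    exact setIntegral_mono_set hgint (Eventually.of_forall hgnn)
      (HasSubset.Subset.eventuallyLE Set.Ioc_subset_Ioi_self)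
  have e7 : d * u = (1/B) * Real.sqrt (u / f u) := by
    have h1 : Real.sqrt (L * (u * f u)) = Real.sqrt L * (Real.sqrt u * Real.sqrt (f u)) := by
      rw [Real.sqrt_mul hLpos.le, Real.sqrt_mul hu.le]
    have h2 : Real.sqrt (u / f u) = Real.sqrt u / Real.sqrt (f u) := Real.sqrt_div hu.le _
    have hsu : 0 < Real.sqrt u := Real.sqrt_pos.2 hu
    have hsf : 0 < Real.sqrt (f u) := Real.sqrt_pos.2 hfu
    have hsL : 0 < Real.sqrt L := Real.sqrt_pos.2 hLpos
    have husq : Real.sqrt u * Real.sqrt u = u := Real.mul_self_sqrt hu.le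
    rw [hd, h1, h2, hB]
    field_simp
    linear_combination (-1) * husq
  have hBpos : 0 < B := by rw [hB]; exact Real.sqrt_pos.2 hLpos
  constructor
  · have hCB : B ≤ max 1 (max A B) := le_trans (le_max_right A B) (le_max_right 1 _)
    have h10 : (1 / max 1 (max A B)) * Real.sqrt (u / f u)
        ≤ (1/B) * Real.sqrt (u / f u) :=
      mul_le_mul_of_nonneg_right (one_div_le_one_div_of_le hBpos hCB)
        (Real.sqrt_nonneg _)
    calc (1 / max 1 (max A B)) * Real.sqrt (u / f u)
        ≤ (1/B) * Real.sqrt (u / f u) := h10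
      _ = d * u := e7.symm
      _ ≤ ∫ t in Set.Ioc u (2*u), 1 / Real.sqrt (Fant f t) := h7
      _ ≤ phi f u := h9
  · calc phi f u ≤ A * Real.sqrt (u / f u) := hup
      _ ≤ max 1 (max A B) * Real.sqrt (u / f u) :=
        mul_le_mul_of_nonneg_right
          (le_trans (le_max_left A B) (le_max_right 1 _)) (Real.sqrt_nonneg _)
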